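/- Let β(t) be the trajectory of the reparametrized gradient flow with initialization w_+(0) = w_−(0) = ω_0 where all entries of ω_0 are nonzero. Then for all t ≥ 0, β(t) = ω_0^{⊙2} ⊙ sinh(Σ_{i=1}^n Σ_{l≠opt(i)} φ_{il}(t) B_{il}) (sinh applied entrywise), where φ_{il}(t) := −(2/n) ∫_0^t exp(−γ_i^⊤ S(g_i(β(τ)))) (Σ(g_i(β(τ))) γ_i)_l dτ. -/

import Mathlib

open Real Filter Finset

noncomputable section

namespace AttnGF

/-- Softmax of a vector in `ℝ^L`. -/
def S {L : ℕ} (u : Fin L → ℝ) (l : Fin L) : ℝ := Real.exp (u l) / ∑ j, Real.exp (u j)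

/-- Euclidean norm of a vector. -/
def l2 {d : ℕ} (x : Fin d → ℝ) : ℝ := Real.sqrt (∑ j, x j ^ 2)

/-- ℓ1 norm of a vector. -/
def l1 {d : ℕ} (x : Fin d → ℝ) : ℝ := ∑ j, |x j|

variable {n L d de : ℕ}

/-- Token scores γ_{il} = y_i v^⊤ x_{il}. -/
def gam (X : Fin n → Fin L → Fin d → ℝ) (y : Fin n → ℝ) (v : Fin d → ℝ)
    (i : Fin n) (l : Fin L) : ℝ := y i * ∑ j, v j * X i l j

/-- g_i(β) = X_i (β ⊙ z_i) for the diagonal attention model. -/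
def gD (X : Fin n → Fin L → Fin d → ℝ) (z : Fin n → Fin d → ℝ) (i : Fin n)
    (β : Fin d → ℝ) (l : Fin L) : ℝ := ∑ j, X i l j * (β j * z i j)

/-- Empirical exponential loss for the diagonal attention model. -/
def lossD (X : Fin n → Fin L → Fin d → ℝ) (z : Fin n → Fin d → ℝ)
    (y : Fin n → ℝ) (v : Fin d → ℝ) (β : Fin d → ℝ) : ℝ :=
  (1 / (n : ℝ)) * ∑ i, Real.exp (-(∑ l, gam X y v i l * S (gD X z i β) l))

/-- Constraint vectors B_{il} = z_i ⊙ (x_{i,opt(i)} − x_{il}). -/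
def Bv (X : Fin n → Fin L → Fin d → ℝ) (z : Fin n → Fin d → ℝ)
    (opt : Fin n → Fin L) (i : Fin n) (l : Fin L) (j : Fin d) : ℝ :=
  z i j * (X i (opt i) j - X i l j)

/-- (Σ(u) γ)_l where Σ(u) = Diag(S(u)) − S(u) S(u)^⊤. -/
def SigMul {L : ℕ} (u γv : Fin L → ℝ) (l : Fin L) : ℝ :=
  S u l * γv l - S u l * ∑ j, S u j * γv j

/-- j-th component of the gradient (partial derivative) of f at x. -/
def pD {d : ℕ} (f : (Fin d → ℝ) → ℝ) (x : Fin d → ℝ) (j : Fin d) : ℝ :=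
  fderiv ℝ f x (Pi.single j 1)

/-- Assumption A1. -/
def A1 (X : Fin n → Fin L → Fin d → ℝ) (y : Fin n → ℝ) (v : Fin d → ℝ)
    (opt : Fin n → Fin L) (nopt : Fin n → ℝ) : Prop :=
  ∀ i : Fin n, ∀ l : Fin L, l ≠ opt i →
    gam X y v i l < gam X y v i (opt i) ∧ gam X y v i l = nopt i

/-- Feasibility for the ℓ1-SVM. -/
def Feas (X : Fin n → Fin L → Fin d → ℝ) (z : Fin n → Fin d → ℝ)
    (opt : Fin n → Fin L) (βf : Fin d → ℝ) : Prop :=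
  ∀ i : Fin n, ∀ l : Fin L, l ≠ opt i → 1 ≤ ∑ j, βf j * Bv X z opt i l j

/-- Reparametrized gradient flow on (w₊, w₋). -/
def Flow (X : Fin n → Fin L → Fin d → ℝ) (z : Fin n → Fin d → ℝ)
    (y : Fin n → ℝ) (v : Fin d → ℝ) (wp wm : ℝ → Fin d → ℝ) : Prop :=
  ∀ t : ℝ, 0 ≤ t → ∀ j : Fin d,
    HasDerivAt (fun s => wp s j)
      (-(pD (fun u => lossD X z y v (fun k => (u k ^ 2 - wm t k ^ 2) / 2)) (wp t) j)) t ∧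
    HasDerivAt (fun s => wm s j)
      (-(pD (fun u => lossD X z y v (fun k => (wp t k ^ 2 - u k ^ 2) / 2)) (wm t) j)) t

/-- β(t) = (w₊(t)^{⊙2} − w₋(t)^{⊙2})/2. -/
def bCurve (wp wm : ℝ → Fin d → ℝ) (t : ℝ) (j : Fin d) : ℝ :=
  (wp t j ^ 2 - wm t j ^ 2) / 2

/-- Assumption A2 (initial loss bound). -/
def A2 (X : Fin n → Fin L → Fin d → ℝ) (z : Fin n → Fin d → ℝ)
    (y : Fin n → ℝ) (v : Fin d → ℝ) (opt : Fin n → Fin L) (nopt : Fin n → ℝ)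
    (β0 : Fin d → ℝ) : Prop :=
  ∀ jj : Fin n, lossD X z y v β0 ≤
    (Real.exp (-(nopt jj)) +
      ∑ i ∈ Finset.univ.erase jj, Real.exp (-(gam X y v i (opt i)))) / (n : ℝ)

/-- Margin μ(β) = min_{i, l ≠ opt(i)} β^⊤ B_{il}. -/
def margin (X : Fin n → Fin L → Fin d → ℝ) (z : Fin n → Fin d → ℝ)
    (opt : Fin n → Fin L) (β : Fin d → ℝ) : ℝ :=
  sInf {m : ℝ | ∃ i : Fin n, ∃ l : Fin L, l ≠ opt i ∧ m = ∑ j, β j * Bv X z opt i l j}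

/-- φ_{il}(t). -/
def phi (X : Fin n → Fin L → Fin d → ℝ) (z : Fin n → Fin d → ℝ)
    (y : Fin n → ℝ) (v : Fin d → ℝ) (β : ℝ → Fin d → ℝ) (i : Fin n) (l : Fin L)
    (t : ℝ) : ℝ :=
  -(2 / (n : ℝ)) * ∫ τ in (0:ℝ)..t,
    Real.exp (-(∑ l', gam X y v i l' * S (gD X z i (β τ)) l')) *
      SigMul (gD X z i (β τ)) (gam X y v i) l

/-- Dual variables λ_{il}(t) = φ_{il}(t) / ln μ(β(t)). -/
def lam (X : Fin n → Fin L → Fin d → ℝ) (z : Fin n → Fin d → ℝ)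
    (y : Fin n → ℝ) (v : Fin d → ℝ) (opt : Fin n → Fin L) (β : ℝ → Fin d → ℝ)
    (i : Fin n) (l : Fin L) (t : ℝ) : ℝ :=
  (1 / Real.log (margin X z opt (β t))) * phi X z y v β i l t

/-- g_i(K,Q) = X_i K Q^⊤ z_i for the full attention model. -/
def gM (X : Fin n → Fin L → Fin d → ℝ) (z : Fin n → Fin d → ℝ) (i : Fin n)
    (K Q : Fin d → Fin de → ℝ) (l : Fin L) : ℝ :=
  ∑ a, ∑ b, ∑ c, X i l a * K a b * Q c b * z i c

/-- Empirical exponential loss for the full attention model. -/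
def lossM (X : Fin n → Fin L → Fin d → ℝ) (z : Fin n → Fin d → ℝ)
    (y : Fin n → ℝ) (v : Fin d → ℝ) (K Q : Fin d → Fin de → ℝ) : ℝ :=
  (1 / (n : ℝ)) * ∑ i, Real.exp (-(∑ l, gam X y v i l * S (gM X z i K Q) l))

/-- Partial derivative of f with respect to the (a,b) entry of a matrix. -/
def pDM {d de : ℕ} (f : (Fin d → Fin de → ℝ) → ℝ) (M : Fin d → Fin de → ℝ)
    (a : Fin d) (b : Fin de) : ℝ :=
  fderiv ℝ f M (Pi.single a (Pi.single b 1))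

/-- Gradient flow on the key and query matrices. -/
def MFlow (X : Fin n → Fin L → Fin d → ℝ) (z : Fin n → Fin d → ℝ)
    (y : Fin n → ℝ) (v : Fin d → ℝ) (K Q : ℝ → Fin d → Fin de → ℝ) : Prop :=
  ∀ t : ℝ, 0 ≤ t → ∀ (a : Fin d) (b : Fin de),
    HasDerivAt (fun s => K s a b) (-(pDM (fun M => lossM X z y v M (Q t)) (K t) a b)) t ∧
    HasDerivAt (fun s => Q s a b) (-(pDM (fun M => lossM X z y v (K t) M) (Q t) a b)) t

/-- A rectangular matrix is diagonal: zero off the main diagonal. -/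
def RectDiag {d de : ℕ} (M : Fin d → Fin de → ℝ) : Prop :=
  ∀ (a : Fin d) (b : Fin de), (a : ℕ) ≠ (b : ℕ) → M a b = 0

/-- Orthogonality: U^⊤ U = 1. -/
def Orth {d : ℕ} (U : Fin d → Fin d → ℝ) : Prop :=
  ∀ j j' : Fin d, ∑ a, U a j * U a j' = (if j = j' then (1:ℝ) else 0)

/-- Assumption B1, with the pairing of non-optimal tokens given by the involution σ. -/
def B1 (X : Fin n → Fin L → Fin d → ℝ) (z : Fin n → Fin d → ℝ)
    (opt : Fin n → Fin L) (σ : Fin n → Fin L → Fin L) : Prop :=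
  (∀ i j : Fin n, i ≠ j →
    (∑ a, X i (opt i) a * X j (opt j) a = 0) ∧ (∑ a, z i a * z j a = 0)) ∧
  (∀ i, |∑ a, X i (opt i) a * z i a| = l2 (X i (opt i)) * l2 (z i)) ∧
  (∀ i, ∀ l, l ≠ opt i → σ i l ≠ opt i ∧ σ i l ≠ l ∧ σ i (σ i l) = l ∧
    ∃ c : ℝ, -1 ≤ c ∧ c < 1 ∧
      (∑ a, X i (opt i) a * (X i l a - X i (σ i l) a)) = 0 ∧
      (∀ a, X i l a + X i (σ i l) a = 2 * c * X i (opt i) a))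

/-- Rotated constraint vectors B̃_{il}. -/
def Btil (X : Fin n → Fin L → Fin d → ℝ) (z : Fin n → Fin d → ℝ)
    (opt : Fin n → Fin L) (pim : Fin n → Fin d) (i : Fin n) (l : Fin L) (j : Fin d) : ℝ :=
  Real.sign (∑ a, X i (opt i) a * z i a) * (∑ a, (X i (opt i) a - X i l a) * z i a) *
    (if j = pim i then 1 else 0)

/-- Margin with respect to the rotated constraints. -/
def marginB (X : Fin n → Fin L → Fin d → ℝ) (z : Fin n → Fin d → ℝ)
    (opt : Fin n → Fin L) (pim : Fin n → Fin d) (β : Fin d → ℝ) : ℝ :=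
  sInf {m : ℝ | ∃ i : Fin n, ∃ l : Fin L, l ≠ opt i ∧ m = ∑ j, β j * Btil X z opt pim i l j}

/-- Margin for a combined attention weight matrix. -/
def marginM (X : Fin n → Fin L → Fin d → ℝ) (z : Fin n → Fin d → ℝ)
    (opt : Fin n → Fin L) (W : Fin d → Fin d → ℝ) : ℝ :=
  sInf {m : ℝ | ∃ i : Fin n, ∃ l : Fin L, l ≠ opt i ∧
    m = ∑ a, ∑ c, (X i (opt i) a - X i l a) * W a c * z i c}

/-- Nuclear norm ‖W‖_* = trace((W^⊤W)^{1/2}). -/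
def nuclear {d : ℕ} (W : Matrix (Fin d) (Fin d) ℝ) : ℝ :=
  (let hA := Matrix.posSemidef_conjTranspose_mul_self W
   (hA.1.eigenvectorUnitary.1 *
      Matrix.diagonal ((RCLike.ofReal : ℝ → ℝ) ∘ (Real.sqrt ·) ∘ hA.1.eigenvalues) *
      (star hA.1.eigenvectorUnitary : Matrix (Fin d) (Fin d) ℝ))).trace

end AttnGF

namespace AttnGF

/-!
Along the flow `ẇ₊ = -w₊ ⊙ ∇L(β)` and `ẇ₋ = w₋ ⊙ ∇L(β)`, so with `A(t) = ∫₀ᵗ ∇L(β(τ)) dτ`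
one gets `w₊ = ω₀ ⊙ e^{-A}`, `w₋ = ω₀ ⊙ e^{A}`, hence `β = ω₀^{⊙2} ⊙ sinh(-2A)`. The chain rule
through the softmax gives `∇L(β) = -(1/n) Σᵢ e^{-γᵢᵀS(gᵢ)} Σ_l (Σ(gᵢ)γᵢ)_l (x_{il} ⊙ zᵢ)`; since
the entries of `Σ(u)γ` sum to zero, `x_{il}` may be replaced by `x_{il} - x_{i,opt(i)}`, which
turns `-2A` into `Σ_{i, l ≠ opt(i)} φ_{il} B_{il}`.
-/

local notation "proj" => ContinuousLinearMap.proj (R := ℝ) (φ := fun _ => ℝ)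

section Softmax

variable {L : ℕ}

lemma sum_SigMul (u γ : Fin L → ℝ) : ∑ l, SigMul u γ l = 0 := by
  rcases Nat.eq_zero_or_pos L with rfl | hL
  · simp
  have hS : ∑ l, S u l = 1 := by
    simp only [S, ← Finset.sum_div]
    exact div_self (Finset.sum_pos (fun _ _ => exp_pos _) ⟨⟨0, hL⟩, mem_univ _⟩).ne'
  simp [SigMul, Finset.sum_sub_distrib, ← Finset.sum_mul, hS]

lemma hasFDerivAt_softmax (u : Fin L → ℝ) (l : Fin L) :
    HasFDerivAt (fun u => S u l) (S u l • (proj l - ∑ m, S u m • proj m)) u := by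
  have hD : (∑ m, exp (u m)) ≠ 0 :=
    (Finset.sum_pos (fun _ _ => exp_pos _) ⟨l, mem_univ _⟩).ne'
  have hsum : HasFDerivAt (fun u : Fin L → ℝ => ∑ m, exp (u m)) (∑ m, exp (u m) • proj m) u :=
    HasFDerivAt.fun_sum fun m _ => (hasFDerivAt_apply m u).exp
  have h := ((hasFDerivAt_apply l u).exp).mul ((hasDerivAt_inv hD).comp_hasFDerivAt u hsum)
  refine h.congr_fderiv (ContinuousLinearMap.ext fun w => ?_)
  simp only [S, add_apply, smul_apply, sub_apply, _root_.sum_apply,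
    ContinuousLinearMap.proj_apply, smul_eq_mul, Function.comp_apply, div_mul_eq_mul_div,
    ← Finset.sum_div]
  field_simp
  ring

lemma hasFDerivAt_softmax_mean (u γ : Fin L → ℝ) :
    HasFDerivAt (fun u => ∑ l, γ l * S u l) (∑ m, SigMul u γ m • proj m) u := by
  refine (HasFDerivAt.fun_sum fun l _ => (hasFDerivAt_softmax u l).const_mul (γ l)).congr_fderiv
    (ContinuousLinearMap.ext fun w => ?_)
  simp only [SigMul, smul_apply, sub_apply, _root_.sum_apply, ContinuousLinearMap.proj_apply,
    smul_eq_mul, mul_sub, sub_mul, Finset.sum_sub_distrib, Finset.mul_sum, Finset.sum_mul]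
  rw [Finset.sum_comm]
  congr 1
  · exact Finset.sum_congr rfl fun _ _ => by ring
  · exact Finset.sum_congr rfl fun _ _ => Finset.sum_congr rfl fun _ _ => by ring

@[fun_prop]
lemma continuous_softmax (l : Fin L) : Continuous fun u : Fin L → ℝ => S u l :=
  continuous_iff_continuousAt.2 fun u => (hasFDerivAt_softmax u l).continuousAt

end Softmax

section Gradient

variable {n L d : ℕ} (X : Fin n → Fin L → Fin d → ℝ) (z : Fin n → Fin d → ℝ)
  (y : Fin n → ℝ) (v : Fin d → ℝ)

def lossGrad (β : Fin d → ℝ) (j : Fin d) : ℝ :=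
  -(1 / (n : ℝ)) * ∑ i, exp (-(∑ l, gam X y v i l * S (gD X z i β) l)) *
    ∑ l, SigMul (gD X z i β) (gam X y v i) l * (X i l j * z i j)

lemma hasFDerivAt_gD (i : Fin n) (β : Fin d → ℝ) :
    HasFDerivAt (gD X z i) (ContinuousLinearMap.pi fun l => ∑ j, (X i l j * z i j) • proj j) β :=
  hasFDerivAt_pi.2 fun l => HasFDerivAt.fun_sum fun j _ =>
    ((hasFDerivAt_apply j β).mul_const (z i j)).const_mul (X i l j) |>.congr_fderiv
      (by rw [smul_smul])

lemma hasFDerivAt_softmax_mean_gD (γ : Fin L → ℝ) (i : Fin n) (β : Fin d → ℝ) :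
    HasFDerivAt (fun β => ∑ l, γ l * S (gD X z i β) l)
      (∑ j, (∑ l, SigMul (gD X z i β) γ l * (X i l j * z i j)) • proj j) β := by
  refine ((hasFDerivAt_softmax_mean _ γ).comp β (hasFDerivAt_gD X z i β)).congr_fderiv
    (ContinuousLinearMap.ext fun w => ?_)
  simp only [ContinuousLinearMap.comp_apply, _root_.sum_apply, smul_apply,
    ContinuousLinearMap.proj_apply, ContinuousLinearMap.pi_apply, smul_eq_mul,
    Finset.mul_sum, Finset.sum_mul]
  rw [Finset.sum_comm]
  exact Finset.sum_congr rfl fun _ _ => Finset.sum_congr rfl fun _ _ => by ring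

lemma hasFDerivAt_lossD (β : Fin d → ℝ) :
    HasFDerivAt (lossD X z y v) (∑ j, lossGrad X z y v β j • proj j) β := by
  refine ((HasFDerivAt.fun_sum fun i _ =>
    ((hasFDerivAt_softmax_mean_gD X z (gam X y v i) i β).neg).exp).const_mul
      (1 / (n : ℝ))).congr_fderiv (ContinuousLinearMap.ext fun w => ?_)
  simp only [lossGrad, _root_.sum_apply, smul_apply, neg_apply, Pi.neg_apply,
    ContinuousLinearMap.proj_apply, smul_eq_mul, mul_neg, neg_mul, Finset.sum_neg_distrib,
    Finset.mul_sum, Finset.sum_mul]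
  rw [Finset.sum_comm]
  exact congrArg _ (Finset.sum_congr rfl fun _ _ => Finset.sum_congr rfl fun _ _ =>
    Finset.sum_congr rfl fun _ _ => by ring)

end Gradient

lemma hasFDerivAt_comp_coordwise {d : ℕ} {f : (Fin d → ℝ) → ℝ} {g : Fin d → ℝ}
    {φ : Fin d → ℝ → ℝ} {φ' : Fin d → ℝ} {w : Fin d → ℝ}
    (hf : HasFDerivAt f (∑ k, g k • proj k) (fun k => φ k (w k)))
    (hφ : ∀ k, HasDerivAt (φ k) (φ' k) (w k)) :
    HasFDerivAt (fun u => f (fun k => φ k (u k))) (∑ k, (φ' k * g k) • proj k) w := by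
  have hΦ : HasFDerivAt (fun u k => φ k (u k)) (ContinuousLinearMap.pi fun k => φ' k • proj k) w :=
    hasFDerivAt_pi.2 fun k => (hφ k).comp_hasFDerivAt w (hasFDerivAt_apply k w)
  refine (hf.comp w hΦ).congr_fderiv (ContinuousLinearMap.ext fun u => ?_)
  simp only [ContinuousLinearMap.comp_apply, _root_.sum_apply, smul_apply,
    ContinuousLinearMap.proj_apply, ContinuousLinearMap.pi_apply, smul_eq_mul]
  exact Finset.sum_congr rfl fun _ _ => by ring

lemma pD_eq_of_hasFDerivAt {d : ℕ} {f : (Fin d → ℝ) → ℝ} {g x : Fin d → ℝ}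
    (hf : HasFDerivAt f (∑ k, g k • proj k) x) (j : Fin d) : pD f x j = g j := by
  simp [pD, hf.fderiv, Pi.single_apply]

section Continuity

variable {n L d : ℕ} (X : Fin n → Fin L → Fin d → ℝ) (z : Fin n → Fin d → ℝ)
  (y : Fin n → ℝ) (v : Fin d → ℝ)

@[fun_prop]
lemma continuous_gD (i : Fin n) : Continuous (gD X z i) :=
  continuous_iff_continuousAt.2 fun β => (hasFDerivAt_gD X z i β).continuousAt

lemma continuous_lossGrad (j : Fin d) : Continuous fun β => lossGrad X z y v β j := by
  unfold lossGrad SigMul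
  fun_prop

lemma continuous_phi_integrand (i : Fin n) (l : Fin L) :
    Continuous fun β => exp (-(∑ l', gam X y v i l' * S (gD X z i β) l')) *
      SigMul (gD X z i β) (gam X y v i) l := by
  unfold SigMul
  fun_prop

end Continuity

lemma sum_erase_SigMul_mul_sub {L : ℕ} (u γ a : Fin L → ℝ) (o : Fin L) :
    ∑ l ∈ univ.erase o, SigMul u γ l * (a o - a l) = -∑ l, SigMul u γ l * a l := by
  rw [Finset.sum_erase _ (by rw [sub_self, mul_zero])]
  simp only [mul_sub, Finset.sum_sub_distrib, ← Finset.sum_mul, sum_SigMul, zero_mul, zero_sub]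

section ConstraintVectors

variable {n L d : ℕ} (X : Fin n → Fin L → Fin d → ℝ) (z : Fin n → Fin d → ℝ)
  (y : Fin n → ℝ) (v : Fin d → ℝ) (opt : Fin n → Fin L)

lemma sum_erase_SigMul_mul_Bv (i : Fin n) (u γ : Fin L → ℝ) (j : Fin d) :
    ∑ l ∈ univ.erase (opt i), SigMul u γ l * Bv X z opt i l j
      = -∑ l, SigMul u γ l * (X i l j * z i j) := by
  calc _ = z i j * ∑ l ∈ univ.erase (opt i), SigMul u γ l * (X i (opt i) j - X i l j) := by
        rw [Finset.mul_sum]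
        exact Finset.sum_congr rfl fun _ _ => by rw [Bv]; ring
    _ = _ := by
        rw [sum_erase_SigMul_mul_sub u γ (fun l => X i l j), mul_neg, Finset.mul_sum]
        exact congrArg _ (Finset.sum_congr rfl fun _ _ => by ring)

lemma sum_erase_mul_Bv_eq_lossGrad (β : Fin d → ℝ) (j : Fin d) :
    ∑ i, ∑ l ∈ univ.erase (opt i), -(2 / (n : ℝ)) *
        (exp (-(∑ l', gam X y v i l' * S (gD X z i β) l')) *
          SigMul (gD X z i β) (gam X y v i) l) * Bv X z opt i l j
      = -2 * lossGrad X z y v β j := by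
  simp only [lossGrad, mul_assoc, ← Finset.mul_sum, sum_erase_SigMul_mul_Bv, mul_neg,
    Finset.sum_neg_distrib]
  ring

lemma sum_phi_mul_Bv {β : ℝ → Fin d → ℝ} {t : ℝ} (hβ : ContinuousOn β (Set.uIcc 0 t))
    (j : Fin d) :
    ∑ i, ∑ l ∈ univ.erase (opt i), phi X z y v β i l t * Bv X z opt i l j
      = -2 * ∫ τ in 0..t, lossGrad X z y v (β τ) j := by
  have hc : ∀ i l, ContinuousOn (fun τ => -(2 / (n : ℝ)) *
      (exp (-(∑ l', gam X y v i l' * S (gD X z i (β τ)) l')) *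
        SigMul (gD X z i (β τ)) (gam X y v i) l) * Bv X z opt i l j) (Set.uIcc 0 t) :=
    fun i l => (continuousOn_const.mul
      ((continuous_phi_integrand X z y v i l).comp_continuousOn hβ)).mul continuousOn_const
  calc _ = ∑ i, ∑ l ∈ univ.erase (opt i), ∫ τ in 0..t, -(2 / (n : ℝ)) *
        (exp (-(∑ l', gam X y v i l' * S (gD X z i (β τ)) l')) *
          SigMul (gD X z i (β τ)) (gam X y v i) l) * Bv X z opt i l j := by
        simp only [phi, intervalIntegral.integral_mul_const, intervalIntegral.integral_const_mul]
    _ = ∫ τ in 0..t, ∑ i, ∑ l ∈ univ.erase (opt i), -(2 / (n : ℝ)) *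
        (exp (-(∑ l', gam X y v i l' * S (gD X z i (β τ)) l')) *
          SigMul (gD X z i (β τ)) (gam X y v i) l) * Bv X z opt i l j := by
        rw [intervalIntegral.integral_finsetSum fun i _ =>
          (continuousOn_finsetSum _ fun l _ => hc i l).intervalIntegrable]
        exact Finset.sum_congr rfl fun i _ =>
          (intervalIntegral.integral_finsetSum fun l _ => (hc i l).intervalIntegrable).symm
    _ = _ := by
        simp only [sum_erase_mul_Bv_eq_lossGrad, intervalIntegral.integral_const_mul]

end ConstraintVectors

lemma eq_mul_exp_integral_of_hasDerivAt {w a : ℝ → ℝ} {t : ℝ} (ht : 0 ≤ t)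
    (ha : ContinuousOn a (Set.Icc 0 t)) (hw : ∀ τ ∈ Set.Icc 0 t, HasDerivAt w (a τ * w τ) τ) :
    w t = w 0 * exp (∫ τ in 0..t, a τ) := by
  set A := fun s => ∫ τ in 0..s, a τ
  have hai : IntervalIntegrable a MeasureTheory.volume 0 t := ha.intervalIntegrable_of_Icc ht
  have hAc : ContinuousOn A (Set.Icc 0 t) := by
    simpa [Set.uIcc_of_le ht] using
      intervalIntegral.continuousOn_primitive_interval' hai Set.left_mem_uIcc
  have hA : ∀ τ ∈ Set.Ioo 0 t, HasDerivAt A (a τ) τ := fun τ hτ =>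
    intervalIntegral.integral_hasDerivAt_right
      ((ha.mono (Set.Icc_subset_Icc_right hτ.2.le)).intervalIntegrable_of_Icc hτ.1.le)
      ((ha.mono Set.Ioo_subset_Icc_self).stronglyMeasurableAtFilter isOpen_Ioo τ hτ)
      (ha.continuousAt (Icc_mem_nhds hτ.1 hτ.2))
  have hconst := intervalIntegral.integral_eq_sub_of_hasDerivAt_of_le
    (f := fun s => w s * exp (-A s)) (f' := 0) ht
    ((continuousOn_of_forall_continuousAt fun τ hτ => (hw τ hτ).continuousAt).mul hAc.neg.rexp)
    (fun τ hτ => ((hw τ (Set.Ioo_subset_Icc_self hτ)).mul (hA τ hτ).neg.exp).congr_deriv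
      (by simp only [Pi.neg_apply, mul_neg, Pi.zero_apply]; ring))
    intervalIntegrable_const
  have h0 : A 0 = 0 := intervalIntegral.integral_same
  simp only [Pi.zero_apply, intervalIntegral.integral_zero, h0, neg_zero, exp_zero,
    mul_one] at hconst
  calc w t = w t * exp (-A t) * exp (A t) := by
        rw [mul_assoc, ← exp_add, neg_add_cancel, exp_zero, mul_one]
    _ = w 0 * exp (A t) := by rw [sub_eq_zero.1 hconst.symm]

section Flow

variable {n L d : ℕ} {X : Fin n → Fin L → Fin d → ℝ} {z : Fin n → Fin d → ℝ}
  {y : Fin n → ℝ} {v : Fin d → ℝ} {wp wm : ℝ → Fin d → ℝ}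

lemma hasDerivAt_half_sq_sub (c x : ℝ) : HasDerivAt (fun x => (x ^ 2 - c) / 2) x x :=
  (((hasDerivAt_pow 2 x).sub_const c).div_const 2).congr_deriv (by ring)

lemma hasDerivAt_half_sub_sq (c x : ℝ) : HasDerivAt (fun x => (c - x ^ 2) / 2) (-x) x :=
  (((hasDerivAt_pow 2 x).const_sub c).div_const 2).congr_deriv (by ring)

lemma Flow.hasDerivAt_wp (hflow : Flow X z y v wp wm) {τ : ℝ} (hτ : 0 ≤ τ) (j : Fin d) :
    HasDerivAt (fun s => wp s j) (-lossGrad X z y v (bCurve wp wm τ) j * wp τ j) τ := by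
  have hpD : pD (fun u => lossD X z y v (fun k => (u k ^ 2 - wm τ k ^ 2) / 2)) (wp τ) j
      = wp τ j * lossGrad X z y v (bCurve wp wm τ) j :=
    pD_eq_of_hasFDerivAt (hasFDerivAt_comp_coordwise (φ := fun k x => (x ^ 2 - wm τ k ^ 2) / 2)
      (hasFDerivAt_lossD X z y v _) fun k => hasDerivAt_half_sq_sub _ _) j
  have h := (hflow τ hτ j).1
  rw [hpD] at h
  exact h.congr_deriv (by ring)

lemma Flow.hasDerivAt_wm (hflow : Flow X z y v wp wm) {τ : ℝ} (hτ : 0 ≤ τ) (j : Fin d) :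
    HasDerivAt (fun s => wm s j) (lossGrad X z y v (bCurve wp wm τ) j * wm τ j) τ := by
  have hpD : pD (fun u => lossD X z y v (fun k => (wp τ k ^ 2 - u k ^ 2) / 2)) (wm τ) j
      = -wm τ j * lossGrad X z y v (bCurve wp wm τ) j :=
    pD_eq_of_hasFDerivAt (hasFDerivAt_comp_coordwise (φ := fun k x => (wp τ k ^ 2 - x ^ 2) / 2)
      (hasFDerivAt_lossD X z y v _) fun k => hasDerivAt_half_sub_sq _ _) j
  have h := (hflow τ hτ j).2
  rw [hpD] at h
  exact h.congr_deriv (by ring)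

lemma Flow.continuousAt_bCurve (hflow : Flow X z y v wp wm) {τ : ℝ} (hτ : 0 ≤ τ) :
    ContinuousAt (bCurve wp wm) τ :=
  continuousAt_pi.2 fun k => (((hflow τ hτ k).1.continuousAt.pow 2).sub
    ((hflow τ hτ k).2.continuousAt.pow 2)).div_const 2

end Flow

theorem statement6_general {n L d : ℕ}
    (X : Fin n → Fin L → Fin d → ℝ) (z : Fin n → Fin d → ℝ)
    (y : Fin n → ℝ) (v : Fin d → ℝ)
    (opt : Fin n → Fin L)
    (wp wm : ℝ → Fin d → ℝ) (hflow : Flow X z y v wp wm)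
    (ω0 : Fin d → ℝ)
    (hip : wp 0 = ω0) (him : wm 0 = ω0) :
    ∀ t : ℝ, 0 ≤ t → ∀ j : Fin d,
      bCurve wp wm t j = ω0 j ^ 2 *
        Real.sinh (∑ i : Fin n, ∑ l ∈ Finset.univ.erase (opt i),
          phi X z y v (bCurve wp wm) i l t * Bv X z opt i l j) := by
  intro t ht j
  have hβ : ContinuousOn (bCurve wp wm) (Set.Icc 0 t) := fun τ hτ =>
    (hflow.continuousAt_bCurve hτ.1).continuousWithinAt
  have ha : ContinuousOn (fun τ => lossGrad X z y v (bCurve wp wm τ) j) (Set.Icc 0 t) :=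
    (continuous_lossGrad X z y v j).comp_continuousOn hβ
  set A := ∫ τ in 0..t, lossGrad X z y v (bCurve wp wm τ) j
  have hwp : wp t j = ω0 j * exp (-A) := by
    rw [← intervalIntegral.integral_neg, ← hip]
    exact eq_mul_exp_integral_of_hasDerivAt ht ha.neg fun τ hτ => hflow.hasDerivAt_wp hτ.1 j
  have hwm : wm t j = ω0 j * exp A := by
    rw [← him]
    exact eq_mul_exp_integral_of_hasDerivAt ht ha fun τ hτ => hflow.hasDerivAt_wm hτ.1 j
  rw [sum_phi_mul_Bv X z y v opt (by rwa [Set.uIcc_of_le ht]) j, bCurve, hwp, hwm, sinh_eq,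
    show -(-2 * A) = A + A by ring, show -2 * A = -A + -A by ring, exp_add, exp_add]
  ring

/-- closed form β(t) = ω₀^{⊙2} ⊙ sinh(Σ φ_{il}(t) B_{il}). -/
theorem statement6 {n L d : ℕ}
    (X : Fin n → Fin L → Fin d → ℝ) (z : Fin n → Fin d → ℝ)
    (y : Fin n → ℝ) (v : Fin d → ℝ)
    (opt : Fin n → Fin L)
    (hopt : ∀ i : Fin n, ∀ l : Fin L, l ≠ opt i → gam X y v i l < gam X y v i (opt i))
    (wp wm : ℝ → Fin d → ℝ) (hflow : Flow X z y v wp wm)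
    (ω0 : Fin d → ℝ) (hω : ∀ j, ω0 j ≠ 0)
    (hip : wp 0 = ω0) (him : wm 0 = ω0) :
    ∀ t : ℝ, 0 ≤ t → ∀ j : Fin d,
      bCurve wp wm t j = ω0 j ^ 2 *
        Real.sinh (∑ i : Fin n, ∑ l ∈ Finset.univ.erase (opt i),
          phi X z y v (bCurve wp wm) i l t * Bv X z opt i l j) :=
  statement6_general X z y v opt wp wm hflow ω0 hip him

end AttnGF
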